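/- Fix δ ∈ (0,1) and let Δ(τ₂, δ) := (1+δ)(1−τ₂)/(2−τ₂) − (1−δ)τ₂/(1+τ₂). Then Δ(·, δ) is strictly decreasing on [0,1], Δ(1/2, δ) > 0 and Δ(1, δ) < 0, and there exists a unique τ̂₂(δ) ∈ (1/2, 1) with Δ(τ̂₂(δ), δ) = 0; moreover τ̂₂(δ) = (−(1−δ) + √(1+3δ²))/(2δ). -/

import Mathlib

noncomputable section

/-! Discrimination setting (Section 5.2 of the paper): `K = 2`, prior means `0`,
prior variances `Σ⁰₁ = Σ⁰₂ = 1`, budget `T = 1`.  For discrimination level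
`δ ∈ (0,1)` the politician's weights are `((1+δ)/2, (1−δ)/2)`; for partiality
level `p ∈ [0,1)` the advisor's weights are `((1−p)/2, (1+p)/2)`.

* `ah1 p δ, ah2 p δ` are the auxiliary weights `α̂₁(p,δ), α̂₂(p,δ)`.
* `tau2aux p δ` is `τ₂^aux(p,δ)` and `tau2star p δ = min{τ₂^aux(p,δ), 1}` is the
  advisor's equilibrium allocation of tests to group 2 (group 1 gets the rest).
* `omega τ₂ δ` is utilitarian welfare as a function of the allocation, and
  `W p δ = ω(τ₂*(p,δ), δ)` is equilibrium welfare.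
* `Dlt τ₂ δ` is the difference of the two groups' ex ante expected utilities and
  `Ineq p δ = |Δ(τ₂*(p,δ), δ)|` is equilibrium inequality. -/

/-- Auxiliary weight `α̂₁(p,δ)`. -/
def ah1 (p δ : ℝ) : ℝ :=
  if p < (1 - δ) / 2 then (1 / 2) * Real.sqrt ((1 + δ) * (1 - 2 * p - δ)) else 0

/-- Auxiliary weight `α̂₂(p,δ)`. -/
def ah2 (p δ : ℝ) : ℝ := (1 / 2) * Real.sqrt ((1 - δ) * (1 + 2 * p + δ))

/-- `τ₂^aux(p,δ)`. -/
def tau2aux (p δ : ℝ) : ℝ := (2 * ah2 p δ - ah1 p δ) / (ah1 p δ + ah2 p δ)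

/-- The advisor's equilibrium allocation of tests to group 2, `τ₂*(p,δ)`. -/
def tau2star (p δ : ℝ) : ℝ := min (tau2aux p δ) 1

/-- Utilitarian welfare `ω(τ₂, δ)` from splitting the budget as `(1−τ₂, τ₂)`. -/
def omega (τ2 δ : ℝ) : ℝ :=
  -3 - δ ^ 2 + ((1 + δ) ^ 2 / 2 + (1 + δ) * (1 - τ2)) / (2 - τ2)
    + ((1 - δ) ^ 2 / 2 + (1 - δ) * τ2) / (1 + τ2)

/-- Equilibrium welfare `W(p,δ)`. -/
def W (p δ : ℝ) : ℝ := omega (tau2star p δ) δ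

/-- Difference `Δ(τ₂,δ)` of the two groups' ex ante expected utilities. -/
def Dlt (τ2 δ : ℝ) : ℝ :=
  (1 + δ) * (1 - τ2) / (2 - τ2) - (1 - δ) * τ2 / (1 + τ2)

/-- Equilibrium inequality `I(p,δ)`. -/
def Ineq (p δ : ℝ) : ℝ := |Dlt (tau2star p δ) δ|

/-! On `(-1, 2)` the map `τ ↦ Δ(τ, δ)` is `(1+δ)(1 - 1/(2-τ)) - (1-δ)(1 - 1/(1+τ))`, a decreasing
function minus an increasing one. Clearing its denominators turns `Δ(τ, δ) = 0` into the quadratic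
`2δτ² + 2(1-δ)τ - (1+δ) = 0`, whose discriminant is `4(1 + 3δ²)` and whose positive root is `τ̂₂(δ)`;
strict monotonicity makes it the only zero. -/

open Set

/-- The paper's `τ̂₂(δ)`. -/
def tauHat (δ : ℝ) : ℝ := (-(1 - δ) + Real.sqrt (1 + 3 * δ ^ 2)) / (2 * δ)

theorem strictAntiOn_Dlt {δ : ℝ} (hδ₀ : -1 < δ) (hδ₁ : δ < 1) :
    StrictAntiOn (fun t => Dlt t δ) (Ioo (-1) 2) := by
  rintro x ⟨hx₀, hx₁⟩ y ⟨hy₀, hy₁⟩ hxy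
  have hfirst : (1 - y) / (2 - y) < (1 - x) / (2 - x) := by
    rw [div_lt_div_iff₀ (by linarith) (by linarith)]; nlinarith
  have hsecond : x / (1 + x) < y / (1 + y) := by
    rw [div_lt_div_iff₀ (by linarith) (by linarith)]; nlinarith
  have h₁ := mul_lt_mul_of_pos_left hfirst (show 0 < 1 + δ by linarith)
  have h₂ := mul_lt_mul_of_pos_left hsecond (show 0 < 1 - δ by linarith)
  simp only [Dlt, mul_div_assoc]
  linarith

theorem Dlt_one_half (δ : ℝ) : Dlt (1 / 2) δ = 2 * δ / 3 := by
  norm_num [Dlt]; ring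

theorem Dlt_one (δ : ℝ) : Dlt 1 δ = -(1 - δ) / 2 := by
  norm_num [Dlt]; ring

theorem Dlt_eq_div {t : ℝ} (δ : ℝ) (ht₀ : 1 + t ≠ 0) (ht₁ : 2 - t ≠ 0) :
    Dlt t δ = -(2 * δ * t ^ 2 + 2 * (1 - δ) * t - (1 + δ)) / ((2 - t) * (1 + t)) := by
  rw [Dlt, div_sub_div _ _ ht₁ ht₀]
  ring

theorem tauHat_quadratic {δ : ℝ} (hδ : δ ≠ 0) :
    2 * δ * tauHat δ ^ 2 + 2 * (1 - δ) * tauHat δ - (1 + δ) = 0 := by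
  have hs : Real.sqrt (1 + 3 * δ ^ 2) ^ 2 = 1 + 3 * δ ^ 2 := Real.sq_sqrt (by positivity)
  rw [tauHat]
  generalize Real.sqrt (1 + 3 * δ ^ 2) = s at hs ⊢
  field_simp
  linear_combination hs

theorem tauHat_mem_Ioo {δ : ℝ} (hδ₀ : 0 < δ) (hδ₁ : δ < 1) : tauHat δ ∈ Ioo (1 / 2) 1 := by
  have hs : Real.sqrt (1 + 3 * δ ^ 2) ^ 2 = 1 + 3 * δ ^ 2 := Real.sq_sqrt (by positivity)
  have hs₀ := Real.sqrt_nonneg (1 + 3 * δ ^ 2)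
  constructor
  · rw [tauHat, lt_div_iff₀ (by linarith)]; nlinarith
  · rw [tauHat, div_lt_one (by linarith)]; nlinarith

theorem Dlt_tauHat {δ : ℝ} (hδ₀ : 0 < δ) (hδ₁ : δ < 1) : Dlt (tauHat δ) δ = 0 := by
  obtain ⟨hlo, hhi⟩ := tauHat_mem_Ioo hδ₀ hδ₁
  rw [Dlt_eq_div δ (by linarith) (by linarith), tauHat_quadratic hδ₀.ne', neg_zero, zero_div]

/-- Lemma 6 of the paper.  `Δ(·,δ)` is strictly decreasing on
`[0,1]`, positive at `1/2`, negative at `1`, and has the unique zero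
`τ̂₂(δ) = (−(1−δ) + √(1+3δ²))/(2δ)` in `(1/2, 1)`. -/
theorem stmt_12 (δ : ℝ) (hδ : δ ∈ Set.Ioo (0 : ℝ) 1) :
    StrictAntiOn (fun t => Dlt t δ) (Set.Icc (0 : ℝ) 1) ∧
    0 < Dlt (1 / 2) δ ∧ Dlt 1 δ < 0 ∧
    (let τhat : ℝ := (-(1 - δ) + Real.sqrt (1 + 3 * δ ^ 2)) / (2 * δ)
     τhat ∈ Set.Ioo (1 / 2 : ℝ) 1 ∧ Dlt τhat δ = 0 ∧
      ∀ t ∈ Set.Ioo (1 / 2 : ℝ) 1, Dlt t δ = 0 → t = τhat) := by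
  obtain ⟨hδ₀, hδ₁⟩ := hδ
  have hanti := strictAntiOn_Dlt (by linarith) hδ₁
  have hsub : Ioo (1 / 2 : ℝ) 1 ⊆ Ioo (-1) 2 := Ioo_subset_Ioo (by norm_num) (by norm_num)
  refine ⟨hanti.mono (Icc_subset_Ioo (by norm_num) (by norm_num)),
    by rw [Dlt_one_half]; positivity, by rw [Dlt_one]; linarith,
    tauHat_mem_Ioo hδ₀ hδ₁, Dlt_tauHat hδ₀ hδ₁, fun t ht hzero => ?_⟩
  exact hanti.injOn (hsub ht) (hsub (tauHat_mem_Ioo hδ₀ hδ₁))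
    (hzero.trans (Dlt_tauHat hδ₀ hδ₁).symm)
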